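/- Let g: ℝ → (0,∞) be such that t ↦ log(g(t)) is convex and t ↦ e^t g(t) is bounded on (-∞,0]. Then t ↦ e^t g(t) is increasing on ℝ, and consequently t ↦ e^{-t}/g(t) is decreasing on ℝ. -/
import Mathlib


theorem logConvex_bdd_monotone (g : ℝ → ℝ) (hpos : ∀ t, 0 < g t)
    (hlc : ConvexOn ℝ Set.univ (fun t => Real.log (g t)))
    (M : ℝ) (hbdd : ∀ t ≤ (0:ℝ), Real.exp t * g t ≤ M) :
    Monotone (fun t => Real.exp t * g t) ∧
      Antitone (fun t => Real.exp (-t) / g t) := by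
  set f : ℝ → ℝ := fun t => t + Real.log (g t) with hf
  have hconv : ConvexOn ℝ Set.univ f := (convexOn_id convex_univ).add hlc
  have hMpos : 0 < M := lt_of_lt_of_le (mul_pos (Real.exp_pos 0) (hpos 0)) (hbdd 0 le_rfl)
  have hfle : ∀ t ≤ (0:ℝ), f t ≤ Real.log M := by
    intro t ht
    have h1 : Real.exp t * g t ≤ M := hbdd t ht
    have h2 : Real.log (Real.exp t * g t) ≤ Real.log M :=
      Real.log_le_log (mul_pos (Real.exp_pos t) (hpos t)) h1
    rwa [Real.log_mul (Real.exp_ne_zero t) (hpos t).ne', Real.log_exp] at h2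
  have hmono : Monotone f := by
    intro a b hab
    rcases eq_or_lt_of_le hab with rfl | hab
    · exact le_rfl
    by_contra hcon
    push_neg at hcon
    set s : ℝ := (f b - f a) / (b - a) with hs
    have hsneg : s < 0 := div_neg_of_neg_of_pos (by linarith) (by linarith)
    set C : ℝ := max 0 ((Real.log M - f a) / (-s)) + 1 with hC
    have hC0 : 0 < C := by positivity
    set t : ℝ := min a 0 - C with ht
    clear_value s C t
    have hta : t < a := by
      have : min a 0 ≤ a := min_le_left _ _
      simp only [ht]; linarith
    have ht0 : t ≤ 0 := by
      have : min a 0 ≤ 0 := min_le_right _ _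
      simp only [ht]; linarith
    have h1 : (f a - f t) / (a - t) ≤ s := by
      rw [hs]
      exact hconv.slope_mono_adjacent (Set.mem_univ t) (Set.mem_univ b) hta hab
    have h2 : f a - f t ≤ s * (a - t) := by
      have := (div_le_iff₀ (by linarith : (0:ℝ) < a - t)).mp h1
      linarith
    have hat : C ≤ a - t := by
      have : min a 0 ≤ a := min_le_left _ _
      simp only [ht]; linarith
    have h5 : (-s) * max 0 ((Real.log M - f a) / (-s)) ≥ Real.log M - f a := by
      calc (-s) * max 0 ((Real.log M - f a) / (-s))
          ≥ (-s) * ((Real.log M - f a) / (-s)) :=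
            mul_le_mul_of_nonneg_left (le_max_right _ _) (by linarith)
        _ = Real.log M - f a := by
            rw [mul_comm, div_mul_cancel₀ _ (by linarith : -s ≠ 0)]
    have hCe : (-s) * C = (-s) * max 0 ((Real.log M - f a) / (-s)) + (-s) := by
      rw [hC]; ring
    have h3 : Real.log M - f a < (-s) * C := by
      calc Real.log M - f a ≤ (-s) * max 0 ((Real.log M - f a) / (-s)) := h5
        _ < (-s) * max 0 ((Real.log M - f a) / (-s)) + (-s) := by linarith
        _ = (-s) * C := hCe.symm
    have h6 : (-s) * C ≤ (-s) * (a - t) :=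
      mul_le_mul_of_nonneg_left hat (by linarith)
    have h7 : Real.log M < f t := by nlinarith
    exact absurd (hfle t ht0) (not_le.mpr h7)
  have hexp : ∀ t, Real.exp t * g t = Real.exp (f t) := by
    intro t
    rw [hf]
    simp only
    rw [Real.exp_add, Real.exp_log (hpos t)]
  have hmono' : Monotone (fun t => Real.exp t * g t) := by
    intro a b hab
    simp only [hexp]
    exact Real.exp_le_exp.mpr (hmono hab)
  refine ⟨hmono', ?_⟩
  intro a b hab
  have key : Real.exp a * g a ≤ Real.exp b * g b := hmono' hab
  have hinv : ∀ t : ℝ, Real.exp (-t) / g t = (Real.exp t * g t)⁻¹ := by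
    intro t
    rw [Real.exp_neg, mul_inv, div_eq_mul_inv]
  simp only [hinv]
  exact inv_anti₀ (mul_pos (Real.exp_pos a) (hpos a)) key
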